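/- arXiv:2210.07366 — 10 statements merged into one kernel-verified Lean document; each statement's English description precedes it below -/
import Mathlib

section
/- Let (a,b,c) be a generalized Markov triple, i.e., positive integers satisfying a² + b² + c² + ab + ac + bc = 6abc. Then 6ab − a − b − c is a positive integer, a² + ab + b² = c·(6ab − a − b − c), and (a, b, 6ab − a − b − c) is again a generalized Markov triple. -/
/-- A generalized Markov triple: positive integers with
a² + b² + c² + ab + ac + bc = 6abc. Vieta jumping: 6ab − a − b − c is positive,
a² + ab + b² = c(6ab − a − b − c), and (a, b, 6ab − a − b − c) is again a
generalized Markov triple. -/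
theorem gen_markov_vieta_jump (a b c : ℤ) (ha : 0 < a) (hb : 0 < b) (hc : 0 < c)
    (h : a ^ 2 + b ^ 2 + c ^ 2 + a * b + a * c + b * c = 6 * a * b * c) :
    0 < 6 * a * b - a - b - c ∧
    a ^ 2 + a * b + b ^ 2 = c * (6 * a * b - a - b - c) ∧
    a ^ 2 + b ^ 2 + (6 * a * b - a - b - c) ^ 2 + a * b + a * (6 * a * b - a - b - c)
        + b * (6 * a * b - a - b - c) = 6 * a * b * (6 * a * b - a - b - c) := by
  have h2 : a ^ 2 + a * b + b ^ 2 = c * (6 * a * b - a - b - c) := by linarith [h]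
  have hpos : 0 < c * (6 * a * b - a - b - c) := by nlinarith
  refine ⟨(mul_pos_iff.mp hpos).elim (fun h => h.2) (fun h => absurd h.1 (not_lt.mpr hc.le)), h2, by linarith [h]⟩
end

section
/- Let k ≥ 2 and let a₁,…,a_k be positive integers. Then K(a₂, a₃, …, a_{k−1}, a_k + 1, a_k, a_{k−1}, …, a_2, a₁) = K(a₁, a₂, …, a_{k−1}, a_k + 1, a_k, a_{k−1}, …, a₂) + c_k, where c_k = 1 if k is even and c_k = −1 if k is odd. Here the left-hand sequence is a₂, a₃, …, a_{k−1}, a_k+1, a_k, a_{k−1}, …, a₂, a₁ and the right-hand sequence is a₁, a₂, …, a_{k−1}, a_k+1, a_k, a_{k−1}, …, a₂ (each of length 2k−1). -/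
open Matrix

def continuant : List ℤ → ℤ
  | [] => 1
  | [a] => a
  | a :: b :: t => a * continuant (b :: t) + continuant t

def mA (x : ℤ) : Matrix (Fin 2) (Fin 2) ℤ := !![x, 1; 1, 0]

def Ml (l : List ℤ) : Matrix (Fin 2) (Fin 2) ℤ := (l.map mA).prod

lemma Ml_nil : Ml [] = 1 := rfl

lemma Ml_cons (x : ℤ) (l : List ℤ) : Ml (x :: l) = mA x * Ml l := by
  simp [Ml]

lemma Ml_append (x y : List ℤ) : Ml (x ++ y) = Ml x * Ml y := by
  simp [Ml]

lemma mA_transpose (x : ℤ) : (mA x)ᵀ = mA x := by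
  ext i j; fin_cases i <;> fin_cases j <;> simp [mA]

lemma Ml_reverse (l : List ℤ) : Ml l.reverse = (Ml l)ᵀ := by
  induction l with
  | nil => simp [Ml_nil]
  | cons x t ih =>
      rw [List.reverse_cons, Ml_append, ih, Ml_cons x t, Matrix.transpose_mul, mA_transpose]
      simp [Ml]

lemma cont_pair (l : List ℤ) :
    ∀ x : ℤ, Ml (x :: l) 0 0 = continuant (x :: l) ∧ Ml (x :: l) 1 0 = continuant l := by
  induction l with
  | nil => intro x; constructor <;> simp [Ml, mA, continuant]
  | cons b t ih =>
      intro x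
      have hb := ih b
      rw [Ml_cons x (b :: t)]
      constructor
      · show (mA x * Ml (b :: t)) 0 0 = _
        rw [Matrix.mul_apply, Fin.sum_univ_two, hb.1, hb.2]
        simp [mA, continuant]
      · show (mA x * Ml (b :: t)) 1 0 = _
        rw [Matrix.mul_apply, Fin.sum_univ_two, hb.1]
        simp [mA]

lemma cont_eq (l : List ℤ) : continuant l = Ml l 0 0 := by
  cases l with
  | nil => simp [Ml, continuant]
  | cons x t => exact ((cont_pair t x).1).symm

lemma Ml_det (l : List ℤ) : (Ml l).det = (-1) ^ l.length := by
  induction l with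
  | nil => simp [Ml_nil]
  | cons x t ih =>
      rw [Ml_cons, Matrix.det_mul, ih]
      have : (mA x).det = -1 := by simp [mA, Matrix.det_fin_two_of]
      rw [this]; simp [pow_succ]

/-- For k ≥ 2 and positive integers a₁,…,a_k (here a i for 1 ≤ i ≤ k),
K(a₂,…,a_{k−1}, a_k+1, a_k, a_{k−1},…,a₂, a₁)
  = K(a₁, a₂,…,a_{k−1}, a_k+1, a_k, a_{k−1},…,a₂) + c_k,
where c_k = 1 if k is even and −1 if k is odd. -/
theorem continuant_swap_plus_one (k : ℕ) (hk : 2 ≤ k) (a : ℕ → ℤ)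
    (ha : ∀ i, 1 ≤ i → i ≤ k → 0 < a i) :
    continuant
      (((List.range (k - 2)).map (fun i => a (i + 2)))
        ++ [a k + 1, a k]
        ++ ((List.range (k - 1)).map (fun i => a (i + 1))).reverse) =
    continuant
      (((List.range (k - 1)).map (fun i => a (i + 1)))
        ++ [a k + 1, a k]
        ++ ((List.range (k - 2)).map (fun i => a (i + 2))).reverse)
    + (if Even k then 1 else -1) := by
  set y : List ℤ := (List.range (k - 2)).map (fun i => a (i + 2)) with hy
  set x : List ℤ := (List.range (k - 1)).map (fun i => a (i + 1)) with hxdef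
  have hk1 : k - 1 = (k - 2) + 1 := by omega
  have hx : x = a 1 :: y := by
    rw [hxdef, hk1, List.range_succ_eq_map, List.map_cons, List.map_map]
    simp [hy, Function.comp]
  have hpar : Even (k - 2) ↔ Even k := by
    rw [Nat.even_sub hk]; simp
  have hif : (if Even k then (1:ℤ) else -1) = (-1) ^ (k - 2) := by
    rcases Nat.even_or_odd (k - 2) with h | h
    · simp [hpar.mp h, h.neg_one_pow]
    · have hko : Odd k := by
        rcases Nat.even_or_odd k with h' | h'
        · exact absurd (hpar.mpr h') (Nat.not_even_iff_odd.mpr h)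
        · exact h'
      simp [Nat.not_even_iff_odd.mpr hko, h.neg_one_pow]
  have hdet : Ml y 0 0 * Ml y 1 1 - Ml y 0 1 * Ml y 1 0 = (-1) ^ (k - 2) := by
    have h := Ml_det y
    rw [Matrix.det_fin_two] at h
    have hlen : y.length = k - 2 := by simp [hy]
    rw [hlen] at h
    linarith
  have hMak : Ml [a k] = mA (a k) := by simp [Ml]
  rw [hif, cont_eq, cont_eq, Ml_append, Ml_append, Ml_append, Ml_append,
    Ml_reverse, Ml_reverse, hx, Ml_cons (a k + 1), Ml_cons (a k), Ml_cons (a 1), Ml_nil, mul_one]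
  simp only [Matrix.mul_apply, Matrix.transpose_apply, Fin.sum_univ_two]
  norm_num [mA]
  linear_combination hdet
end

section
/- Let b, c be positive integers such that (1, b, c) is a generalized Markov triple, i.e., 1 + b² + c² + b + c + bc = 6bc. Then 5c − b − 1 is a positive integer satisfying b·(5c − b − 1) = c² + c + 1, and (1, c, 5c − b − 1) is again a generalized Markov triple. -/
/-- If (1, b, c) is a generalized Markov triple (1 + b² + c² + b + c + bc = 6bc
with b, c positive), then 5c − b − 1 is positive, b(5c − b − 1) = c² + c + 1,
and (1, c, 5c − b − 1) is again a generalized Markov triple. -/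
theorem gen_markov_one_branch (b c : ℤ) (hb : 0 < b) (hc : 0 < c)
    (h : 1 + b ^ 2 + c ^ 2 + b + c + b * c = 6 * b * c) :
    0 < 5 * c - b - 1 ∧
    b * (5 * c - b - 1) = c ^ 2 + c + 1 ∧
    1 + c ^ 2 + (5 * c - b - 1) ^ 2 + c + (5 * c - b - 1) + c * (5 * c - b - 1)
      = 6 * c * (5 * c - b - 1) := by
  have h2 : b * (5 * c - b - 1) = c ^ 2 + c + 1 := by linarith
  have hpos : 0 < b * (5 * c - b - 1) := by nlinarith
  have h1 : 0 < 5 * c - b - 1 := by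
    by_contra hle
    push_neg at hle
    nlinarith
  exact ⟨h1, h2, by nlinarith [h2]⟩
end

section
/- Define the sequence G : ℕ → ℤ by G(0) = 1, G(1) = 3, and G(q) = 5·G(q−1) − G(q−2) − 1 for q ≥ 2. Then G(q) > 0 for all q, and the ratio G(q)/G(q−1) converges, with limit lim_{q→∞} G(q)/G(q−1) = (5 + √21)/2. -/
/-! Shifting by the fixed point `1/3` of `x ↦ 5x - x - 1` makes the recurrence homogeneous:
`3 G q - 1` satisfies `u (n + 2) = 5 u (n + 1) - u n`, whose characteristic roots are
`α = (5 + √21)/2 > 1` and `β = (5 - √21)/2 = α⁻¹ ∈ (0, 1)`. Hence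
`3 G q - 1 = A αᵠ + B βᵠ` with `A = (3 + √21)/√21` and `B = (√21 - 3)/√21` both positive, which
gives positivity, and `3 G q / αᵠ → A ≠ 0`, which forces `G (q + 1) / G q → α`. -/

open Filter Topology

/-- G(q) = m_{1/q}: G(0) = 1, G(1) = 3, G(q) = 5·G(q−1) − G(q−2) − 1. -/
def G : ℕ → ℤ
  | 0 => 1
  | 1 => 3
  | (n + 2) => 5 * G (n + 1) - G n - 1

theorem eq_add_mul_pow_of_recurrence {R : Type*} [CommRing R] {u : ℕ → R} {p q α β A B : R}
    (hu : ∀ n, u (n + 2) = p * u (n + 1) - q * u n)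
    (hα : α ^ 2 = p * α - q) (hβ : β ^ 2 = p * β - q)
    (h0 : u 0 = A + B) (h1 : u 1 = A * α + B * β) (n : ℕ) :
    u n = A * α ^ n + B * β ^ n := by
  induction n using Nat.twoStepInduction with
  | zero => simpa using h0
  | one => simpa using h1
  | more n ih₀ ih₁ =>
    rw [hu, ih₀, ih₁]
    linear_combination (-A * α ^ n) * hα + (-B * β ^ n) * hβ

theorem tendsto_add_mul_pow_add_div_pow {α β : ℝ} (A B C : ℝ) (hα : 1 < |α|) (hβα : |β| < |α|) :
    Tendsto (fun n : ℕ => (A * α ^ n + B * β ^ n + C) / α ^ n) atTop (𝓝 A) := by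
  have hα₀ : α ≠ 0 := abs_pos.mp (one_pos.trans hα)
  have hβα₁ : |β / α| < 1 := by rwa [abs_div, div_lt_one (one_pos.trans hα)]
  have hα₁ : |α⁻¹| < 1 := by rw [abs_inv]; exact inv_lt_one_of_one_lt₀ hα
  have hlim : Tendsto (fun n : ℕ => A + B * (β / α) ^ n + C * α⁻¹ ^ n) atTop
      (𝓝 (A + B * 0 + C * 0)) :=
    (tendsto_const_nhds.add ((tendsto_pow_atTop_nhds_zero_of_abs_lt_one hβα₁).const_mul B)).add
      ((tendsto_pow_atTop_nhds_zero_of_abs_lt_one hα₁).const_mul C)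
  simp only [mul_zero, add_zero] at hlim
  refine hlim.congr fun n => ?_
  rw [div_pow, inv_pow]
  field_simp

theorem tendsto_succ_div_of_tendsto_div_pow {𝕜 : Type*} [NormedField 𝕜] {f : ℕ → 𝕜} {α A : 𝕜}
    (hα : α ≠ 0) (hA : A ≠ 0) (h : Tendsto (fun n => f n / α ^ n) atTop (𝓝 A)) :
    Tendsto (fun n => f (n + 1) / f n) atTop (𝓝 α) := by
  have hlim := ((h.comp (tendsto_add_atTop_nat 1)).const_mul α).div h hA
  rw [mul_div_cancel_right₀ α hA] at hlim
  refine hlim.congr fun n => ?_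
  by_cases hfn : f n = 0
  · simp [hfn]
  · simp only [Pi.div_apply, Function.comp_apply, pow_succ]
    field_simp

theorem three_mul_G_sub_one_eq (n : ℕ) :
    3 * (G n : ℝ) - 1 = (3 + √21) / √21 * ((5 + √21) / 2) ^ n
      + (√21 - 3) / √21 * ((5 - √21) / 2) ^ n := by
  have hs : √21 ^ 2 = 21 := Real.sq_sqrt (by norm_num)
  have hs₀ : √21 ≠ 0 := by positivity
  refine eq_add_mul_pow_of_recurrence (u := fun n => 3 * (G n : ℝ) - 1) (p := 5) (q := 1)
    (fun n => ?_) ?_ ?_ ?_ ?_ n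
  · simp only [G]; push_cast; ring
  · linear_combination hs / 4
  · linear_combination hs / 4
  · simp only [G]; field_simp; ring
  · simp only [G]; field_simp; ring

theorem three_lt_sqrt_21 : 3 < √21 := Real.lt_sqrt_of_sq_lt (by norm_num)

theorem sqrt_21_lt_five : √21 < 5 := by rw [Real.sqrt_lt' (by norm_num)]; norm_num

theorem G_pos (q : ℕ) : 0 < G q := by
  have h := three_mul_G_sub_one_eq q
  have hA : 0 < (3 + √21) / √21 * ((5 + √21) / 2) ^ q := by positivity
  have hB : 0 < (√21 - 3) / √21 * ((5 - √21) / 2) ^ q := by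
    have : 0 < √21 - 3 := by linarith [three_lt_sqrt_21]
    have : 0 < 5 - √21 := by linarith [sqrt_21_lt_five]
    positivity
  exact_mod_cast (show (0 : ℝ) < G q by linarith)

/-- All G(q) are positive, and G(q)/G(q−1) → (5 + √21)/2 as q → ∞. -/
theorem gen_markov_one_over_q_ratio_limit :
    (∀ q, 0 < G q) ∧
    Tendsto (fun q : ℕ => (G (q + 1) : ℝ) / (G q : ℝ)) atTop
      (𝓝 ((5 + Real.sqrt 21) / 2)) := by
  refine ⟨G_pos, ?_⟩
  have hα : (5 + √21) / 2 ≠ 0 := by positivity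
  have hA : (3 + √21) / √21 ≠ 0 := by positivity
  have h3G := tendsto_add_mul_pow_add_div_pow ((3 + √21) / √21) ((√21 - 3) / √21) 1
    (α := (5 + √21) / 2) (β := (5 - √21) / 2)
    (by rw [abs_of_pos (by positivity)]; linarith [Real.sqrt_nonneg 21])
    (by rw [abs_of_pos (by linarith [sqrt_21_lt_five]), abs_of_pos (by positivity)]
        linarith [three_lt_sqrt_21])
  simp_rw [← three_mul_G_sub_one_eq, sub_add_cancel] at h3G
  simpa [mul_div_mul_left] using tendsto_succ_div_of_tendsto_div_pow hα hA h3G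
end

section
/- Define the sequence G : ℕ → ℤ by G(0) = 1, G(1) = 3, and G(q) = 5·G(q−1) − G(q−2) − 1 for q ≥ 2. Then for every q ≥ 0, the triple (1, G(q), G(q+1)) is a generalized Markov triple, i.e., 1 + G(q)² + G(q+1)² + G(q) + G(q+1) + G(q)·G(q+1) = 6·G(q)·G(q+1). -/
/-- For every q ≥ 0, (1, G(q), G(q+1)) is a generalized Markov triple. -/
theorem gen_markov_one_over_q_triple (q : ℕ) :
    1 + G q ^ 2 + G (q + 1) ^ 2 + G q + G (q + 1) + G q * G (q + 1)
      = 6 * G q * G (q + 1) := by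
  induction q with
  | zero => decide
  | succ n ih =>
    have h : G (n + 2) = 5 * G (n + 1) - G n - 1 := rfl
    rw [h]
    linear_combination ih
end

section
/- Let b, c be positive integers such that (3, b, c) is a generalized Markov triple, i.e., 9 + b² + c² + 3b + 3c + bc = 18bc. Then 17c − b − 3 is a positive integer satisfying b·(17c − b − 3) = c² + 3c + 9, and (3, c, 17c − b − 3) is again a generalized Markov triple. -/
/-- If (3, b, c) is a generalized Markov triple (9 + b² + c² + 3b + 3c + bc = 18bc
with b, c positive), then 17c − b − 3 is positive, b(17c − b − 3) = c² + 3c + 9,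
and (3, c, 17c − b − 3) is again a generalized Markov triple. -/
theorem gen_markov_three_branch (b c : ℤ) (hb : 0 < b) (hc : 0 < c)
    (h : 9 + b ^ 2 + c ^ 2 + 3 * b + 3 * c + b * c = 18 * b * c) :
    0 < 17 * c - b - 3 ∧
    b * (17 * c - b - 3) = c ^ 2 + 3 * c + 9 ∧
    9 + c ^ 2 + (17 * c - b - 3) ^ 2 + 3 * c + 3 * (17 * c - b - 3) + c * (17 * c - b - 3)
      = 18 * c * (17 * c - b - 3) := by
  have key : b * (17 * c - b - 3) = c ^ 2 + 3 * c + 9 := by linear_combination -h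
  have pos : 0 < 17 * c - b - 3 := by
    by_contra hle
    push_neg at hle
    nlinarith
  refine ⟨pos, key, ?_⟩
  linear_combination h
end

section
/- Let b, c be positive integers such that (13, b, c) is a generalized Markov triple, i.e., 169 + b² + c² + 13b + 13c + bc = 78bc. Then 77c − b − 13 is a positive integer satisfying b·(77c − b − 13) = c² + 13c + 169, and (13, c, 77c − b − 13) is again a generalized Markov triple. -/
/-- If (13, b, c) is a generalized Markov triple (169 + b² + c² + 13b + 13c + bc = 78bc
with b, c positive), then 77c − b − 13 is positive, b(77c − b − 13) = c² + 13c + 169,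
and (13, c, 77c − b − 13) is again a generalized Markov triple. -/
theorem gen_markov_thirteen_branch (b c : ℤ) (hb : 0 < b) (hc : 0 < c)
    (h : 169 + b ^ 2 + c ^ 2 + 13 * b + 13 * c + b * c = 78 * b * c) :
    0 < 77 * c - b - 13 ∧
    b * (77 * c - b - 13) = c ^ 2 + 13 * c + 169 ∧
    169 + c ^ 2 + (77 * c - b - 13) ^ 2 + 13 * c + 13 * (77 * c - b - 13)
        + c * (77 * c - b - 13)
      = 78 * c * (77 * c - b - 13) := by
  have h2 : b * (77 * c - b - 13) = c ^ 2 + 13 * c + 169 := by nlinarith [sq_nonneg b]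
  have hpos : 0 < 77 * c - b - 13 := by
    have : 0 < b * (77 * c - b - 13) := by nlinarith
    rcases mul_pos_iff.mp this with ⟨_, h'⟩ | ⟨h', _⟩
    · exact h'
    · linarith
  exact ⟨hpos, h2, by nlinarith [sq_nonneg (77 * c - b - 13)]⟩
end

section
/- Define the sequence G : ℕ → ℤ by G(0) = 1, G(1) = 3, and G(q) = 5·G(q−1) − G(q−2) − 1 for q ≥ 2. Then for every k ≥ 0, the continuant of the sequence consisting of the entry 4, followed by k copies of the block (1,3), followed by the entries 2, 1, followed by k copies of the block (3,1), followed by the entry 4, equals G(2k+3). (For example, k = 0 gives K(4,2,1,4) = 61 = G(3).) -/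
/-- 2×2 integer matrices as quadruples (p, q, r, s) = [[p,q],[r,s]]. -/
def mm (x y : ℤ × ℤ × ℤ × ℤ) : ℤ × ℤ × ℤ × ℤ :=
  (x.1 * y.1 + x.2.1 * y.2.2.1, x.1 * y.2.1 + x.2.1 * y.2.2.2,
   x.2.2.1 * y.1 + x.2.2.2 * y.2.2.1, x.2.2.1 * y.2.1 + x.2.2.2 * y.2.2.2)

/-- The continuant matrix of a word. -/
def Mat : List ℤ → ℤ × ℤ × ℤ × ℤ
  | [] => (1, 0, 0, 1)
  | a :: t => mm (a, 1, 1, 0) (Mat t)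

lemma mm_assoc (x y z : ℤ × ℤ × ℤ × ℤ) : mm (mm x y) z = mm x (mm y z) := by
  simp only [mm, Prod.mk.injEq]
  refine ⟨by ring, by ring, by ring, by ring⟩

lemma one_mm (x : ℤ × ℤ × ℤ × ℤ) : mm (1, 0, 0, 1) x = x := by
  obtain ⟨a, b, c, d⟩ := x
  simp [mm]

lemma Mat_append (l r : List ℤ) : Mat (l ++ r) = mm (Mat l) (Mat r) := by
  induction l with
  | nil => simp [Mat, one_mm]
  | cons a t ih => simp [Mat, ih, mm_assoc]

lemma Mat_spec (l : List ℤ) :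
    (Mat l).1 = continuant l ∧ ∀ a t, l = a :: t → (Mat l).2.2.1 = continuant t := by
  induction l with
  | nil => exact ⟨rfl, by intro a t h; cases h⟩
  | cons a t ih =>
    constructor
    · match t with
      | [] => simp [Mat, mm, continuant]
      | b :: t' =>
        have h1 := ih.1
        have h2 := ih.2 b t' rfl
        show (mm (a, 1, 1, 0) (Mat (b :: t'))).1 = _
        simp only [mm]
        rw [h1, h2]
        show a * continuant (b :: t') + 1 * continuant t' = continuant (a :: b :: t')
        rw [show continuant (a :: b :: t') = a * continuant (b :: t') + continuant t' from rfl]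
        ring
    · intro b s h
      rw [List.cons_eq_cons] at h
      obtain ⟨-, rfl⟩ := h
      show (mm (a, 1, 1, 0) (Mat t)).2.2.1 = continuant t
      simp only [mm]
      rw [← ih.1]
      ring

lemma continuant_eq_Mat (l : List ℤ) : continuant l = (Mat l).1 := (Mat_spec l).1.symm

/-- The pair (u_k, u_{k-1}) with u_{k+1} = 5u_k − u_{k-1}, u_0 = 0, u_{-1} = −1. -/
def U : ℕ → ℤ × ℤ
  | 0 => (0, -1)
  | k + 1 => (5 * (U k).1 - (U k).2, (U k).1)

lemma MatX (k : ℕ) : Mat ((List.replicate k [(1 : ℤ), 3]).flatten)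
    = (4 * (U k).1 - (U k).2, (U k).1, 3 * (U k).1, (U k).1 - (U k).2) := by
  induction k with
  | zero => simp [Mat, U]
  | succ k ih =>
    rw [List.replicate_succ, List.flatten_cons, Mat_append, ih]
    show mm (Mat [(1:ℤ), 3]) _ = _
    have hB : Mat [(1:ℤ), 3] = (4, 1, 3, 1) := by
      simp [Mat, mm]
    rw [hB]
    simp only [mm, U, Prod.mk.injEq]
    refine ⟨by ring, by ring, by ring, by ring⟩

lemma MatY (k : ℕ) : Mat ((List.replicate k [(3 : ℤ), 1]).flatten)
    = (4 * (U k).1 - (U k).2, 3 * (U k).1, (U k).1, (U k).1 - (U k).2) := by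
  induction k with
  | zero => simp [Mat, U]
  | succ k ih =>
    rw [List.replicate_succ, List.flatten_cons, Mat_append, ih]
    show mm (Mat [(3:ℤ), 1]) _ = _
    have hD : Mat [(3:ℤ), 1] = (4, 3, 1, 1) := by
      simp [Mat, mm]
    rw [hD]
    simp only [mm, U, Prod.mk.injEq]
    refine ⟨by ring, by ring, by ring, by ring⟩

lemma Gstep (n : ℕ) : G (n + 2) = 5 * G (n + 1) - G n - 1 := rfl

lemma U_inv (k : ℕ) :
    (U k).1 ^ 2 - 5 * (U k).1 * (U k).2 + (U k).2 ^ 2 = 1 ∧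
    291 * (U k).1 ^ 2 - 123 * (U k).1 * (U k).2 + 13 * (U k).2 ^ 2 = G (2 * k + 2) ∧
    1393 * (U k).1 ^ 2 - 583 * (U k).1 * (U k).2 + 61 * (U k).2 ^ 2 = G (2 * k + 3) := by
  induction k with
  | zero =>
    refine ⟨by norm_num [U], ?_, ?_⟩ <;> norm_num [U, G]
  | succ k ih =>
    obtain ⟨h1, h2, h3⟩ := ih
    have e1 : 2 * (k + 1) + 2 = 2 * k + 2 + 2 := by ring
    have e2 : 2 * k + 2 + 1 = 2 * k + 3 := by ring
    have e3 : 2 * (k + 1) + 3 = 2 * k + 3 + 2 := by ring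
    have e4 : 2 * k + 3 + 1 = 2 * (k + 1) + 2 := by ring
    have h2' : 291 * (U (k+1)).1 ^ 2 - 123 * (U (k+1)).1 * (U (k+1)).2
        + 13 * (U (k+1)).2 ^ 2 = G (2 * (k + 1) + 2) := by
      rw [e1, Gstep, e2]
      simp only [U]
      linear_combination 5 * h3 - h2 - h1
    refine ⟨?_, h2', ?_⟩
    · simp only [U]
      linear_combination h1
    · rw [e3, Gstep, e4, ← h2']
      simp only [U]
      linear_combination -h3 - h1

/-- K(4, (1,3)^k, 2, 1, (3,1)^k, 4) = G(2k+3) for every k ≥ 0. -/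
theorem continuant_one_over_odd_q (k : ℕ) :
    continuant
      ([4] ++ (List.replicate k [(1 : ℤ), 3]).flatten ++ [2, 1]
        ++ (List.replicate k [(3 : ℤ), 1]).flatten ++ [4])
      = G (2 * k + 3) := by
  rw [continuant_eq_Mat]
  rw [Mat_append, Mat_append, Mat_append, Mat_append, MatX, MatY]
  have hA : Mat [(4:ℤ)] = (4, 1, 1, 0) := by simp [Mat, mm]
  have hC : Mat [(2:ℤ), 1] = (3, 2, 1, 1) := by simp [Mat, mm]
  rw [hA, hC]
  obtain ⟨h1, h2, h3⟩ := U_inv k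
  simp only [mm]
  linear_combination h3
end

section
/- Define the sequence G : ℕ → ℤ by G(0) = 1, G(1) = 3, and G(q) = 5·G(q−1) − G(q−2) − 1 for q ≥ 2. Then for every k ≥ 0, the continuant of the sequence consisting of the entry 4, followed by k copies of the block (1,3), followed by the entries 1, 2, 3, 1, followed by k copies of the block (3,1), followed by the entry 4, equals G(2k+4). (For example, k = 0 gives K(4,1,2,3,1,4) = 291 = G(4).) -/
namespace ContAux

/-- continuant of the tail, with value 0 for the empty list. -/
def Kt : List ℤ → ℤ
  | [] => 0
  | _ :: t => continuant t

lemma cont_cons (a : ℤ) (l : List ℤ) :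
    continuant (a :: l) = a * continuant l + Kt l := by
  cases l <;> simp [continuant, Kt]

def M (a : ℤ) : Matrix (Fin 2) (Fin 2) ℤ := !![a, 1; 1, 0]

lemma prod_entries (l : List ℤ) :
    ((l.map M).prod) 0 0 = continuant l ∧ ((l.map M).prod) 1 0 = Kt l := by
  induction l with
  | nil => simp [continuant, Kt, Matrix.one_apply]
  | cons a t ih =>
    simp only [List.map_cons, List.prod_cons]
    refine ⟨?_, ?_⟩
    · rw [cont_cons, ← ih.1, ← ih.2]
      simp [Matrix.mul_apply, Fin.sum_univ_two, M]
    · rw [show Kt (a :: t) = continuant t from rfl, ← ih.1]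
      simp [Matrix.mul_apply, Fin.sum_univ_two, M]

lemma prod_flatten_replicate (k : ℕ) (blk : List ℤ) :
    (((List.replicate k blk).flatten).map M).prod = ((blk.map M).prod) ^ k := by
  induction k with
  | zero => simp
  | succ k ih =>
    rw [List.replicate_succ]
    simp [List.map_append, List.prod_append, ih, pow_succ']

lemma G_rec (n : ℕ) : G (n + 4) = 23 * G (n + 2) - G n - 7 := by
  have h1 : G (n + 4) = 5 * G (n + 3) - G (n + 2) - 1 := rfl
  have h2 : G (n + 3) = 5 * G (n + 2) - G (n + 1) - 1 := rfl
  have h3 : G (n + 2) = 5 * G (n + 1) - G n - 1 := rfl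
  linarith

lemma key (k : ℕ) : ∃ x y a b : ℤ,
    (M 3 * M 1) ^ k * M 4 = !![x, a; y, b] ∧
    M 4 * (M 1 * M 3) ^ k = !![x, y; a, b] ∧
    G (2 * k + 4) = 13 * x ^ 2 + 19 * x * y + 7 * y ^ 2 ∧
    G (2 * k + 2) = x ^ 2 - x * y + y ^ 2 ∧
    x ^ 2 - 3 * x * y - 3 * y ^ 2 = 1 := by
  induction k with
  | zero =>
    refine ⟨4, 1, 1, 0, ?_, ?_, ?_, ?_, ?_⟩
    · simp [M]
    · simp [M]
    · norm_num [G]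
    · norm_num [G]
    · norm_num
  | succ k ih =>
    obtain ⟨x, y, a, b, h1, h2, h3, h4, h5⟩ := ih
    refine ⟨4 * x + 3 * y, x + y, 4 * a + 3 * b, a + b, ?_, ?_, ?_, ?_, ?_⟩
    · rw [pow_succ', mul_assoc, h1]
      ext i j
      fin_cases i <;> fin_cases j <;>
        simp [M, Matrix.mul_apply, Fin.sum_univ_two] <;> ring
    · rw [pow_succ, ← mul_assoc, h2]
      ext i j
      fin_cases i <;> fin_cases j <;>
        simp [M, Matrix.mul_apply, Fin.sum_univ_two] <;> ring
    · have e : 2 * (k + 1) + 4 = (2 * k + 2) + 4 := by ring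
      rw [e, G_rec, h3, h4]
      linear_combination 7 * h5
    · have e : 2 * (k + 1) + 2 = 2 * k + 4 := by ring
      rw [e, h3]; ring
    · linear_combination h5

end ContAux

/-- K(4, (1,3)^k, 1, 2, 3, 1, (3,1)^k, 4) = G(2k+4) for every k ≥ 0. -/
theorem continuant_one_over_even_q (k : ℕ) :
    continuant
      ([4] ++ (List.replicate k [(1 : ℤ), 3]).flatten ++ [1, 2, 3, 1]
        ++ (List.replicate k [(3 : ℤ), 1]).flatten ++ [4])
      = G (2 * k + 4) := by
  obtain ⟨x, y, a, b, h1, h2, h3, h4, h5⟩ := ContAux.key k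
  rw [← (ContAux.prod_entries _).1, h3]
  simp only [List.map_append, List.prod_append, ContAux.prod_flatten_replicate,
    List.map_cons, List.map_nil, List.prod_cons, List.prod_nil, mul_one]
  rw [h2, mul_assoc, h1]
  simp [ContAux.M, Matrix.mul_apply, Fin.sum_univ_two]
  ring
end

section
/- Let x₁, x₂, x₃ be positive real numbers and set δ = x₁ + x₂ + x₃. Define the sequence L₁, L₂, L₃, … of positive reals by L_{2i−1} = (x₁²/x₂²)^{i−1}·(x₃/x₂) and L_{2i} = (x₂²/x₁²)^{i−1}·(δx₂/x₁²) for i ≥ 1. Then the infinite continued fraction [L₁, L₂, L₃, …] converges, and its value is (x₁² + δx₃ − x₂² + √((x₂² − x₁² − δx₃)² + 4x₂²x₃δ))/(2δx₂). -/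
/-!
The entries satisfy `c (i + 2) = r * c i` for even `i` and `c (i + 2) = r⁻¹ * c i` for odd `i`,
with `a = x₃ / x₂`, `b = δ x₂ / x₁²`, `r = x₁² / x₂²`. Rescaling the entries of a continued
fraction alternately by `r` and `r⁻¹` rescales its value by `r`, so the convergents satisfy
`u (n + 2) = F (u n)` for the Möbius map `F s = a + 1 / (b + 1 / (r s))`. Its fixed points are the
roots `p > 0 > q` of a quadratic, `p` being the claimed limit, and in the coordinate
`(s - p) / (s - q)` the map `F` is multiplication by a factor of modulus `< 1`. Hence the odd and
the even convergents both converge to `p`.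
-/

open Filter Topology

/-- Finite continued fraction [c₁,…,cₙ] = c₁ + 1/(c₂ + 1/(⋯ + 1/cₙ)). -/
noncomputable def cfrac : List ℝ → ℝ
  | [] => 0
  | [a] => a
  | a :: b :: t => a + (cfrac (b :: t))⁻¹

lemma cfrac_cons (a : ℝ) (l : List ℝ) : cfrac (a :: l) = a + (cfrac l)⁻¹ := by
  cases l <;> simp [cfrac]

noncomputable def convergent (c : ℕ → ℝ) (n : ℕ) : ℝ :=
  cfrac ((List.range n).map c)

lemma convergent_succ (c : ℕ → ℝ) (n : ℕ) :
    convergent c (n + 1) = c 0 + (convergent (fun i => c (i + 1)) n)⁻¹ := by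
  rw [convergent, List.range_succ_eq_map, List.map_cons, List.map_map, cfrac_cons]
  rfl

lemma convergent_alternating_mul (t : ℝ) (c : ℕ → ℝ) (n : ℕ) :
    convergent (fun i => if Even i then t * c i else t⁻¹ * c i) n = t * convergent c n := by
  induction n generalizing t c with
  | zero => simp [convergent, cfrac]
  | succ n ih =>
    have hshift : (fun i => if Even (i + 1) then t * c (i + 1) else t⁻¹ * c (i + 1)) =
        fun i => if Even i then t⁻¹ * c (i + 1) else t⁻¹⁻¹ * c (i + 1) := by
      funext i
      by_cases hi : Even i <;> simp [Nat.even_add_one, hi]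
    rw [convergent_succ, convergent_succ, hshift, ih, mul_inv, inv_inv]
    simp only [Even.zero, if_true]
    ring

noncomputable def altGeom (a b r : ℝ) (i : ℕ) : ℝ :=
  if Even i then r ^ (i / 2) * a else r⁻¹ ^ (i / 2) * b

lemma altGeom_add_two (a b r : ℝ) (i : ℕ) :
    altGeom a b r (i + 2) =
      if Even i then r * altGeom a b r i else r⁻¹ * altGeom a b r i := by
  have hdiv : (i + 2) / 2 = i / 2 + 1 := by omega
  by_cases hi : Even i <;> simp [altGeom, hi, hdiv, pow_succ, Nat.even_add_one] <;> ring

noncomputable def periodMap (a b r s : ℝ) : ℝ := a + (b + (r * s)⁻¹)⁻¹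

lemma convergent_altGeom_add_two (a b r : ℝ) (n : ℕ) :
    convergent (altGeom a b r) (n + 2) = periodMap a b r (convergent (altGeom a b r) n) := by
  rw [convergent_succ, convergent_succ]
  simp only [altGeom_add_two, convergent_alternating_mul]
  simp [periodMap, altGeom]

section periodMap

variable {a b r : ℝ}

lemma periodMap_pos (ha : 0 < a) (hb : 0 < b) (hr : 0 < r) {s : ℝ} (hs : 0 < s) :
    0 < periodMap a b r s := by
  unfold periodMap
  positivity

/-- Away from degenerate points, `periodMap a b r t = t` iff `periodQuadratic a b r t = 0`. -/
def periodQuadratic (a b r t : ℝ) : ℝ := b * r * t ^ 2 + (1 - a * b * r - r) * t - a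

lemma periodMap_sub_of_periodQuadratic_eq_zero (hb : 0 < b) (hr : 0 < r) {t s : ℝ}
    (ht : periodQuadratic a b r t = 0) (ht' : b * r * t + 1 ≠ 0) (hs : 0 < s) :
    periodMap a b r s - t = r * (s - t) / ((b * r * s + 1) * (b * r * t + 1)) := by
  have hs' : b * r * s + 1 ≠ 0 := by positivity
  rw [periodQuadratic] at ht
  rw [eq_div_iff (mul_ne_zero hs' ht'), periodMap]
  field_simp
  linear_combination (-(b * r * s + 1)) * ht

variable {p q : ℝ}

lemma abs_periodMap_multiplier_lt_one (ha : 0 < a) (hb : 0 < b) (hr : 0 < r)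
    (hp : 0 < p) (hq : q < 0) (hQp : periodQuadratic a b r p = 0)
    (hQq : periodQuadratic a b r q = 0) :
    |(b * r * q + 1) / (b * r * p + 1)| < 1 := by
  rw [periodQuadratic] at hQp hQq
  have hsum : b * r * (p + q) = a * b * r + r - 1 := by
    have hpq : p - q ≠ 0 := by linarith
    apply mul_left_cancel₀ hpq
    linear_combination hQp - hQq
  have hp' : 0 < b * r * p + 1 := by positivity
  rw [abs_div, abs_of_pos hp', div_lt_one hp', abs_lt]
  constructor <;> nlinarith [mul_pos (mul_pos hb hr) (sub_pos.2 (hq.trans hp))]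

lemma periodMap_sub_div_sub (hb : 0 < b) (hr : 0 < r) (hp : 0 < p) (hq : q < 0)
    (hQp : periodQuadratic a b r p = 0) (hQq : periodQuadratic a b r q = 0)
    {s : ℝ} (hs : 0 < s) :
    (periodMap a b r s - p) / (periodMap a b r s - q) =
      (b * r * q + 1) / (b * r * p + 1) * ((s - p) / (s - q)) := by
  have hp' : b * r * p + 1 ≠ 0 := by positivity
  have hq' : b * r * q + 1 ≠ 0 := by
    intro h
    rw [periodQuadratic] at hQq
    have hrq : r * q = 0 := by linear_combination (q - a) * h - hQq
    exact (mul_neg_of_pos_of_neg hr hq).ne hrq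
  rw [periodMap_sub_of_periodQuadratic_eq_zero hb hr hQp hp' hs,
    periodMap_sub_of_periodQuadratic_eq_zero hb hr hQq hq' hs]
  have hs' : b * r * s + 1 ≠ 0 := by positivity
  have hsq : s - q ≠ 0 := by linarith
  field_simp

theorem tendsto_of_periodMap_recurrence (ha : 0 < a) (hb : 0 < b) (hr : 0 < r)
    (hp : 0 < p) (hq : q < 0) (hQp : periodQuadratic a b r p = 0)
    (hQq : periodQuadratic a b r q = 0) {s : ℕ → ℝ} (hs₀ : 0 < s 0)
    (hs : ∀ m, s (m + 1) = periodMap a b r (s m)) :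
    Tendsto s atTop (𝓝 p) := by
  have hpos : ∀ m, 0 < s m := by
    intro m
    induction m with
    | zero => exact hs₀
    | succ m ih => rw [hs]; exact periodMap_pos ha hb hr ih
  set κ := (b * r * q + 1) / (b * r * p + 1)
  set e : ℕ → ℝ := fun m => (s m - p) / (s m - q)
  have he : ∀ m, e m = κ ^ m * e 0 := by
    intro m
    induction m with
    | zero => simp
    | succ m ih =>
      simp only [e, hs, periodMap_sub_div_sub hb hr hp hq hQp hQq (hpos m)] at ih ⊢
      rw [ih, pow_succ]
      ring
  have he_lim : Tendsto e atTop (𝓝 0) := by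
    have hκ := (tendsto_pow_atTop_nhds_zero_of_abs_lt_one
      (abs_periodMap_multiplier_lt_one ha hb hr hp hq hQp hQq)).mul_const (e 0)
    rw [zero_mul] at hκ
    exact hκ.congr fun m => (he m).symm
  have hs_eq : ∀ m, s m = (p - q * e m) / (1 - e m) := by
    intro m
    have hsq : s m - q ≠ 0 := by linarith [hpos m]
    have hpq : p - q ≠ 0 := by linarith
    simp only [e]
    field_simp
    rw [show s m - q - (s m - p) = p - q by ring, eq_div_iff hpq]
    ring
  have hlim := ((tendsto_const_nhds (x := p)).sub (he_lim.const_mul q)).div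
    ((tendsto_const_nhds (x := (1 : ℝ))).sub he_lim) (by norm_num)
  simp only [mul_zero, sub_zero, div_one] at hlim
  exact hlim.congr fun m => (hs_eq m).symm

end periodMap

theorem Filter.Tendsto.of_even_odd {α : Type*} {u : ℕ → α} {l : Filter α}
    (h₀ : Tendsto (fun m => u (2 * m)) atTop l) (h₁ : Tendsto (fun m => u (2 * m + 1)) atTop l) :
    Tendsto u atTop l := by
  rw [tendsto_atTop'] at *
  intro s hs
  obtain ⟨N₀, hN₀⟩ := h₀ s hs
  obtain ⟨N₁, hN₁⟩ := h₁ s hs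
  refine ⟨2 * N₀ + 2 * N₁, fun n hn => ?_⟩
  obtain ⟨m, rfl | rfl⟩ := Nat.even_or_odd' n
  · exact hN₀ m (by omega)
  · exact hN₁ m (by omega)

theorem tendsto_convergent_altGeom {a b r p q : ℝ} (ha : 0 < a) (hb : 0 < b) (hr : 0 < r)
    (hp : 0 < p) (hq : q < 0) (hQp : periodQuadratic a b r p = 0)
    (hQq : periodQuadratic a b r q = 0) :
    Tendsto (convergent (altGeom a b r)) atTop (𝓝 p) := by
  have hlim (s : ℕ → ℝ) := tendsto_of_periodMap_recurrence (s := s) ha hb hr hp hq hQp hQq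
  have hrec := convergent_altGeom_add_two a b r
  apply Tendsto.of_even_odd
  · refine (tendsto_add_atTop_iff_nat 1).1 (hlim _ ?_ fun m => hrec _)
    rw [show 2 * (0 + 1) = 0 + 2 from rfl, hrec]
    simp [periodMap, convergent, cfrac]
    positivity
  · refine hlim _ ?_ fun m => hrec _
    simpa [convergent, cfrac, altGeom] using ha

lemma abs_lt_sqrt_discrim {A B C : ℝ} (hA : 0 < A) (hC : C < 0) : |B| < √(discrim A B C) := by
  rw [Real.lt_sqrt (abs_nonneg B), sq_abs, discrim]
  nlinarith [mul_neg_of_pos_of_neg hA hC]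

/-- With δ = x₁ + x₂ + x₃ and L_{2i−1} = (x₁²/x₂²)^{i−1}·(x₃/x₂),
L_{2i} = (x₂²/x₁²)^{i−1}·(δx₂/x₁²), the infinite continued fraction
[L₁, L₂, L₃, …] converges to
(x₁² + δx₃ − x₂² + √((x₂² − x₁² − δx₃)² + 4x₂²x₃δ))/(2δx₂). -/
theorem cfrac_snake_graph_ratio_limit (x₁ x₂ x₃ : ℝ)
    (h₁ : 0 < x₁) (h₂ : 0 < x₂) (h₃ : 0 < x₃) :
    Tendsto
      (fun n : ℕ => cfrac ((List.range n).map
        (fun i => if i % 2 = 0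
          then (x₁ ^ 2 / x₂ ^ 2) ^ (i / 2) * (x₃ / x₂)
          else (x₂ ^ 2 / x₁ ^ 2) ^ (i / 2) * ((x₁ + x₂ + x₃) * x₂ / x₁ ^ 2))))
      atTop
      (𝓝 ((x₁ ^ 2 + (x₁ + x₂ + x₃) * x₃ - x₂ ^ 2 +
          Real.sqrt ((x₂ ^ 2 - x₁ ^ 2 - (x₁ + x₂ + x₃) * x₃) ^ 2
            + 4 * x₂ ^ 2 * x₃ * (x₁ + x₂ + x₃))) /
        (2 * (x₁ + x₂ + x₃) * x₂))) := by
  set δ := x₁ + x₂ + x₃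
  set A := δ * x₂
  set B := x₂ ^ 2 - x₁ ^ 2 - δ * x₃
  set C := -(x₂ * x₃)
  have hA : 0 < A := by positivity
  have hC : C < 0 := neg_neg_of_pos (by positivity)
  have hB := abs_lt_sqrt_discrim (B := B) hA hC
  have hD : discrim A B C = B ^ 2 + 4 * x₂ ^ 2 * x₃ * δ := by simp only [discrim, A, C]; ring
  have hS : discrim A B C = √(discrim A B C) * √(discrim A B C) :=
    (Real.mul_self_sqrt (by rw [hD]; positivity)).symm
  have hperiod : ∀ t, A * (t * t) + B * t + C = 0 →
      periodQuadratic (x₃ / x₂) (A / x₁ ^ 2) (x₁ ^ 2 / x₂ ^ 2) t = 0 := by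
    intro t ht
    simp only [periodQuadratic, A, B, C] at ht ⊢
    field_simp
    linear_combination ht
  have hA2 : 0 < 2 * A := by positivity
  have hp := (quadratic_eq_zero_iff hA.ne' hS _).2 (Or.inl rfl)
  have hq := (quadratic_eq_zero_iff hA.ne' hS _).2 (Or.inr rfl)
  rw [← hD, show x₁ ^ 2 + δ * x₃ - x₂ ^ 2 = -B by ring, show 2 * δ * x₂ = 2 * A by ring]
  convert tendsto_convergent_altGeom (by positivity) (by positivity) (by positivity)
    (div_pos (by linarith [(abs_lt.1 hB).2]) hA2)
    (div_neg_of_neg_of_pos (by linarith [(abs_lt.1 hB).1]) hA2) (hperiod _ hp) (hperiod _ hq)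
    using 1
  funext n
  unfold convergent altGeom
  simp only [Nat.even_iff, inv_div]
end
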